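/- arXiv:0704.0509 — 2 statements merged into one kernel-verified Lean document; each statement's English description precedes it below -/
import Mathlib

section
/- Let $a, b \geq 0$, $0 \leq \alpha < 1$, $0 < T < \infty$, and let $u : [0,T] \to [0,\infty)$ be an integrable function satisfying $u(t) \leq a(T-t)^{-\alpha} + b \int_t^T u(s)\,ds$ for almost every $t \in [0,T)$. Then there exists a constant $M$ depending only on $b$, $\alpha$, and $T$ (one may take $M = 1 + bTe^{bT}/(1-\alpha)$) such that $u(t) \leq a M (T-t)^{-\alpha}$ for almost every $t \in [0,T)$. -/
/-!
Put `W t = ∫_t^T u`. Integrating the hypothesis over `[t, T]` gives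
`W t ≤ a T^(1-α)/(1-α) + b ∫_t^T W`, and the backward Gronwall lemma (the forward one
applied to `r ↦ ∫_{T-r}^T W`) yields `W t ≤ a T^(1-α) e^(bT)/(1-α)`. Substituting this
into the hypothesis and using `T^(1-α) = T · T^(-α) ≤ T (T-t)^(-α)` gives the claim.
-/

open MeasureTheory Set Real intervalIntegral

theorem mul_gronwallBound_δ0 (K ε x : ℝ) :
    K * gronwallBound 0 K ε x = ε * (exp (K * x) - 1) := by
  rcases eq_or_ne K 0 with rfl | hK
  · simp
  · rw [gronwallBound_of_K_ne_0 hK]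
    field_simp
    ring

theorem integral_le_gronwallBound_backward {W : ℝ → ℝ} {C b t₀ T : ℝ} (hW : Continuous W)
    (h : ∀ t ∈ Ioc t₀ T, W t ≤ C + b * ∫ s in t..T, W s) :
    ∀ t ∈ Icc t₀ T, ∫ s in t..T, W s ≤ gronwallBound 0 b C (T - t) := by
  set Y : ℝ → ℝ := fun r => ∫ s in (T - r)..T, W s
  have hY : ∀ r, HasDerivAt Y (W (T - r)) r := fun r => by
    have := (integral_hasDerivAt_left (hW.intervalIntegrable (T - r) T)
      (hW.stronglyMeasurableAtFilter _ _) hW.continuousAt).comp r ((hasDerivAt_id r).const_sub T)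
    simpa [Y, Function.comp_def] using this
  have hYbound := le_gronwallBound_of_liminf_deriv_right_le (f := Y) (δ := 0) (K := b) (ε := C)
    (a := 0) (b := T - t₀)
    (fun r _ => (hY r).continuousAt.continuousWithinAt)
    (fun r _ _ hr => (hY r).hasDerivWithinAt.liminf_right_slope_le hr)
    (by simp [Y]) (fun r hr => by
      simpa [Y, add_comm] using h (T - r) ⟨by linarith [hr.2], by linarith [hr.1]⟩)
  intro t ht
  simpa [Y] using hYbound (T - t) ⟨by linarith [ht.2], by linarith [ht.1]⟩

theorem le_mul_exp_of_le_add_mul_integral_backward {W : ℝ → ℝ} {C b t₀ T : ℝ}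
    (hW : ContinuousOn W (Icc t₀ T)) (hb : 0 ≤ b)
    (h : ∀ t ∈ Icc t₀ T, W t ≤ C + b * ∫ s in t..T, W s) :
    ∀ t ∈ Icc t₀ T, W t ≤ C * exp (b * (T - t)) := by
  intro t ht
  have hle : t₀ ≤ T := ht.1.trans ht.2
  set W' : ℝ → ℝ := fun x => W (projIcc t₀ T hle x)
  have hW' : Continuous W' :=
    hW.comp_continuous (continuous_subtype_val.comp continuous_projIcc) fun x =>
      (projIcc t₀ T hle x).2
  have hW'W : ∀ x ∈ Icc t₀ T, W' x = W x := fun x hx => by simp [W', projIcc_of_mem hle hx]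
  have hint : ∀ x ∈ Icc t₀ T, ∫ s in x..T, W' s = ∫ s in x..T, W s := fun x hx =>
    integral_congr fun s hs => by
      rw [uIcc_of_le hx.2] at hs
      exact hW'W s ⟨hx.1.trans hs.1, hs.2⟩
  have hY := integral_le_gronwallBound_backward hW' (fun x hx => by
    rw [hW'W x (Ioc_subset_Icc_self hx), hint x (Ioc_subset_Icc_self hx)]
    exact h x (Ioc_subset_Icc_self hx)) t ht
  calc W t ≤ C + b * ∫ s in t..T, W s := h t ht
    _ ≤ C + b * gronwallBound 0 b C (T - t) := by rw [← hint t ht]; gcongr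
    _ = C * exp (b * (T - t)) := by rw [mul_gronwallBound_δ0]; ring

theorem intervalIntegrable_sub_rpow {r : ℝ} (hr : -1 < r) (t T : ℝ) :
    IntervalIntegrable (fun s => (T - s) ^ r) volume t T := by
  simpa using (intervalIntegrable_rpow' hr (a := T - t) (b := T - T)).comp_sub_left T

theorem integral_sub_rpow {r : ℝ} (hr : -1 < r) (t T : ℝ) :
    ∫ s in t..T, (T - s) ^ r = (T - t) ^ (r + 1) / (r + 1) := by
  rw [integral_comp_sub_left (fun x => x ^ r) T, sub_self, integral_rpow (Or.inl hr),
    zero_rpow (by linarith), sub_zero]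

theorem integral_le_of_ae_le_rpow_add {v W : ℝ → ℝ} {a b α t T : ℝ} (hα : α < 1)
    (ht : t ≤ T) (hv : IntervalIntegrable v volume t T) (hW : IntervalIntegrable W volume t T)
    (h : ∀ᵐ s ∂volume.restrict (Ico t T), v s ≤ a * (T - s) ^ (-α) + b * W s) :
    ∫ s in t..T, v s ≤ a * (T - t) ^ (1 - α) / (1 - α) + b * ∫ s in t..T, W s := by
  have hr : -1 < -α := by linarith
  have hsing := (intervalIntegrable_sub_rpow hr t T).const_mul a
  calc ∫ s in t..T, v s ≤ ∫ s in t..T, (a * (T - s) ^ (-α) + b * W s) :=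
        integral_mono_ae_restrict ht hv (hsing.add (hW.const_mul b))
          (by rwa [← Measure.restrict_congr_set (Ico_ae_eq_Icc (μ := volume))])
    _ = a * (T - t) ^ (1 - α) / (1 - α) + b * ∫ s in t..T, W s := by
        rw [integral_add hsing (hW.const_mul b),
          intervalIntegral.integral_const_mul, intervalIntegral.integral_const_mul,
          integral_sub_rpow hr, neg_add_eq_sub, mul_div_assoc]

theorem rpow_one_sub_le_mul_rpow_neg {α t T : ℝ} (hα : 0 ≤ α) (ht₀ : 0 ≤ t)
    (htT : t < T) : T ^ (1 - α) ≤ T * (T - t) ^ (-α) := by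
  have hT : 0 < T := ht₀.trans_lt htT
  rw [sub_eq_add_neg, rpow_add hT, rpow_one]
  exact mul_le_mul_of_nonneg_left
    (rpow_le_rpow_of_nonpos (sub_pos.2 htT) (by linarith) (by linarith)) hT.le

/-- Backward Gronwall inequality with singular weight (β = 1 case). -/
theorem backward_gronwall_singular
    (b α T : ℝ) (hb : 0 ≤ b) (hα0 : 0 ≤ α) (hα1 : α < 1) (hT : 0 < T) :
    ∃ M : ℝ, M = 1 + b * T * Real.exp (b * T) / (1 - α) ∧
      ∀ (a : ℝ) (u : ℝ → ℝ), 0 ≤ a →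
        IntegrableOn u (Set.Icc 0 T) →
        (∀ t ∈ Set.Icc 0 T, 0 ≤ u t) →
        (∀ᵐ t ∂(volume.restrict (Set.Ico 0 T)),
          u t ≤ a * (T - t) ^ (-α) + b * ∫ s in t..T, u s) →
        (∀ᵐ t ∂(volume.restrict (Set.Ico 0 T)),
          u t ≤ a * M * (T - t) ^ (-α)) := by
  refine ⟨_, rfl, fun a u ha hu _ h => ?_⟩
  have hα : 0 < 1 - α := by linarith
  set W : ℝ → ℝ := fun t => ∫ s in t..T, u s
  have hW : ContinuousOn W (Icc 0 T) := by
    rw [← uIcc_of_le hT.le] at hu ⊢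
    exact continuousOn_primitive_interval_left hu
  have hint : ∀ t ∈ Icc 0 T, W t ≤ a * T ^ (1 - α) / (1 - α) + b * ∫ s in t..T, W s := by
    intro t ht
    have hu' : IntegrableOn u (uIcc t T) :=
      hu.mono_set (by rw [uIcc_of_le ht.2]; exact Icc_subset_Icc_left ht.1)
    calc W t ≤ a * (T - t) ^ (1 - α) / (1 - α) + b * ∫ s in t..T, W s :=
          integral_le_of_ae_le_rpow_add hα1 ht.2 hu'.intervalIntegrable
            ((hW.mono (Icc_subset_Icc_left ht.1)).intervalIntegrable_of_Icc ht.2)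
            (ae_restrict_of_ae_restrict_of_subset (Ico_subset_Ico_left ht.1) h)
      _ ≤ a * T ^ (1 - α) / (1 - α) + b * ∫ s in t..T, W s := by
          gcongr
          · linarith [ht.2]
          · linarith [ht.1]
  have hWexp := le_mul_exp_of_le_add_mul_integral_backward hW hb hint
  filter_upwards [h, ae_restrict_mem measurableSet_Ico] with t ht htI
  have hWt : W t ≤ a * T ^ (1 - α) / (1 - α) * exp (b * T) := by
    refine (hWexp t (Ico_subset_Icc_self htI)).trans ?_
    gcongr
    linarith [htI.1]
  calc u t ≤ a * (T - t) ^ (-α) + b * W t := ht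
    _ ≤ a * (T - t) ^ (-α) + b * (a * (T * (T - t) ^ (-α)) / (1 - α) * exp (b * T)) := by
        gcongr
        refine hWt.trans ?_
        gcongr
        exact rpow_one_sub_le_mul_rpow_neg hα0 htI.1 htI.2
    _ = a * (1 + b * T * Real.exp (b * T) / (1 - α)) * (T - t) ^ (-α) := by ring
end

section
/- Let $y, y' \in \ell^2(\mathbb{Z})$ and $k \in \mathbb{N}$. Define $f_0(y)_n = (y_{n+1} - y_n)^{2k+1} + (y_{n-1} - y_n)^{2k+1}$. Then $\langle f_0(y) - f_0(y'), y - y' \rangle_{\ell^2(\mathbb{Z})} \leq 0$, i.e., $f_0$ is dissipative on $\ell^2(\mathbb{Z})$. -/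
/-!
Write `u = y - y'` and `G n = d n ^ (2k+1) - d' n ^ (2k+1)`, where `d n = y (n+1) - y n` and
`d' n = y' (n+1) - y' n`. Since `2k+1` is odd, `(f₀ y - f₀ y') n = G n - G (n-1)`, and summation by
parts on `ℤ` turns the inner product into `-∑ G n (u (n+1) - u n) = -∑ G n (d n - d' n)`, each term
of which is nonnegative because `x ↦ x ^ (2k+1)` is monotone. All these series converge: an `ℓ²`
sequence is bounded, so its odd powers stay in `ℓ²`, as do its shifts and differences.
-/

open scoped RealInnerProductSpace

section SquareSummable

variable {ι : Type*} {a b : ι → ℝ}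

theorem lp.summable_sq (x : lp (fun _ : ι => ℝ) 2) : Summable fun i => x i ^ 2 :=
  (lp.summable_inner x x).congr fun i => by rw [real_inner_self_eq_norm_sq, Real.norm_eq_abs, sq_abs]

theorem Summable.mul_of_summable_sq (ha : Summable fun i => a i ^ 2)
    (hb : Summable fun i => b i ^ 2) : Summable fun i => a i * b i :=
  ((ha.add hb).div_const 2).of_norm_bounded fun i => by
    rw [Real.norm_eq_abs, abs_mul, le_div_iff₀ two_pos, ← sq_abs (a i), ← sq_abs (b i)]
    nlinarith [two_mul_le_add_sq |a i| |b i|]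

theorem Summable.sq_sub_of_summable_sq (ha : Summable fun i => a i ^ 2)
    (hb : Summable fun i => b i ^ 2) : Summable fun i => (a i - b i) ^ 2 := by
  have hab := (ha.mul_of_summable_sq hb).mul_left 2
  simpa only [sub_sq, mul_assoc] using (ha.sub hab).add hb

theorem Summable.sq_pow_succ_of_summable_sq (ha : Summable fun i => a i ^ 2) (m : ℕ) :
    Summable fun i => (a i ^ (m + 1)) ^ 2 := by
  have hle : ∀ i, a i ^ 2 ≤ ∑' j, a j ^ 2 := fun i => ha.le_tsum i fun j _ => sq_nonneg (a j)
  refine (ha.mul_left ((∑' j, a j ^ 2) ^ m)).of_nonneg_of_le (fun i => sq_nonneg _) fun i => ?_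
  calc (a i ^ (m + 1)) ^ 2 = (a i ^ 2) ^ m * a i ^ 2 := by ring
    _ ≤ (∑' j, a j ^ 2) ^ m * a i ^ 2 := by gcongr; exact hle i

end SquareSummable

theorem summable_int_comp_add_one_iff {M : Type*} [AddCommMonoid M] [TopologicalSpace M]
    {f : ℤ → M} : (Summable fun n => f (n + 1)) ↔ Summable f :=
  (Equiv.addRight (1 : ℤ)).summable_iff

theorem tsum_int_comp_sub_one {M : Type*} [AddCommMonoid M] [TopologicalSpace M] (f : ℤ → M) :
    ∑' n, f (n - 1) = ∑' n, f n :=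
  (Equiv.subRight (1 : ℤ)).tsum_eq f

theorem lp.summable_sq_sub_comp_add_one (x : lp (fun _ : ℤ => ℝ) 2) :
    Summable fun n => (x (n + 1) - x n) ^ 2 :=
  (summable_int_comp_add_one_iff.2 (lp.summable_sq x)).sq_sub_of_summable_sq (lp.summable_sq x)

/-- Summation by parts on `ℤ`: no boundary terms appear because both series converge. -/
theorem tsum_sub_comp_sub_one_mul {R : Type*} [NonUnitalNonAssocRing R] [TopologicalSpace R]
    [IsTopologicalAddGroup R] [T2Space R] {G u : ℤ → R}
    (h₀ : Summable fun n => G n * u n) (h₁ : Summable fun n => G n * u (n + 1)) :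
    ∑' n, (G n - G (n - 1)) * u n = -∑' n, G n * (u (n + 1) - u n) := by
  have hshift : Summable fun n => G (n - 1) * u n :=
    summable_int_comp_add_one_iff.1 (by simpa only [add_sub_cancel_right] using h₁)
  have hreindex : ∑' n, G (n - 1) * u n = ∑' n, G n * u (n + 1) := by
    simpa only [sub_add_cancel] using tsum_int_comp_sub_one fun n => G n * u (n + 1)
  simp only [sub_mul, mul_sub]
  rw [h₀.tsum_sub hshift, hreindex, h₁.tsum_sub h₀, neg_sub]

theorem Odd.pow_sub_add_pow_sub_eq {R : Type*} [Ring R] {m : ℕ} (hm : Odd m) (a : ℤ → R)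
    (n : ℤ) : (a (n + 1) - a n) ^ m + (a (n - 1) - a n) ^ m =
      (a (n + 1) - a n) ^ m - (a (n - 1 + 1) - a (n - 1)) ^ m := by
  rw [sub_add_cancel, sub_eq_add_neg _ ((a n - a (n - 1)) ^ m), ← hm.neg_pow, neg_sub]

/-- Dissipativity of the spin-system nonlinearity on ℓ²(ℤ). -/
theorem spin_nonlinearity_dissipative (k : ℕ)
    (y y' f0y f0y' : lp (fun _ : ℤ => ℝ) 2)
    (hf : ∀ n : ℤ, f0y n = (y (n + 1) - y n) ^ (2 * k + 1) + (y (n - 1) - y n) ^ (2 * k + 1))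
    (hf' : ∀ n : ℤ, f0y' n = (y' (n + 1) - y' n) ^ (2 * k + 1) + (y' (n - 1) - y' n) ^ (2 * k + 1)) :
    ⟪f0y - f0y', y - y'⟫ ≤ 0 := by
  have hodd : Odd (2 * k + 1) := odd_two_mul_add_one k
  let d : ℤ → ℝ := fun n => y (n + 1) - y n
  let d' : ℤ → ℝ := fun n => y' (n + 1) - y' n
  let G : ℤ → ℝ := fun n => d n ^ (2 * k + 1) - d' n ^ (2 * k + 1)
  let u : ℤ → ℝ := ⇑(y - y')
  have hG : Summable fun n => G n ^ 2 :=
    ((lp.summable_sq_sub_comp_add_one y).sq_pow_succ_of_summable_sq (2 * k)).sq_sub_of_summable_sq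
      ((lp.summable_sq_sub_comp_add_one y').sq_pow_succ_of_summable_sq (2 * k))
  have hu := lp.summable_sq (y - y')
  calc ⟪f0y - f0y', y - y'⟫ = ∑' n, (G n - G (n - 1)) * u n := by
        rw [lp.inner_eq_tsum]
        refine tsum_congr fun n => ?_
        rw [Real.inner_apply, lp.coeFn_sub, Pi.sub_apply, hf, hf', hodd.pow_sub_add_pow_sub_eq,
          hodd.pow_sub_add_pow_sub_eq]
        simp only [G, d, d', u]
        ring
    _ = -∑' n, G n * (u (n + 1) - u n) :=
        tsum_sub_comp_sub_one_mul (hG.mul_of_summable_sq hu)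
          (hG.mul_of_summable_sq (summable_int_comp_add_one_iff (f := fun n => u n ^ 2) |>.2 hu))
    _ ≤ 0 := by
        refine neg_nonpos.2 (tsum_nonneg fun n => ?_)
        have hdiff : u (n + 1) - u n = d n - d' n := by
          simp only [u, d, d', lp.coeFn_sub, Pi.sub_apply]
          ring
        rw [hdiff]
        exact (monovary_id_iff.2 hodd.strictMono_pow.monotone).sub_mul_sub_nonneg (d' n) (d n)
end
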